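/- arXiv:2010.08987 — 2 statements merged into one kernel-verified Lean document; each statement's English description precedes it below -/
import Mathlib

section
/- Fix p > 0 and let u ∈ C⁴(ℝ⁴) be a radially symmetric function satisfying the pointwise equation Δ(Δu)(x) = (1−|x|^p)·e^{4u(x)} for all x ∈ ℝ⁴, where Δ is the Laplacian on ℝ⁴. Then ∫_{ℝ⁴} (1+|x|^p)·e^{4u(x)} dx < ∞. -/
/-!
Write `u x = g ‖x‖²`. In the variable `t = ‖x‖²` the Laplacian becomes
`radialLap g t = 4 t g'' + 8 g'`, and `(t² g')' = (t/4) w`, `(t² w')' = (t/4)(1 - t^(p/2)) e^{4g}`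
where `w = radialLap g`. The second right-hand side is eventually negative, so `J = t² w'` is
eventually decreasing.

If `J` stays nonnegative it converges, hence `∫ t (t^(p/2) - 1) e^{4g} dt < ∞`, and this dominates
the integrand. Otherwise `w` is eventually decreasing. It cannot stay nonnegative: then `t² g'`
increases, `g` is bounded below, `(t² w')' ≤ -c t`, so `w' ≤ -c/4` and `w → -∞`. Hence
`w ≤ -δ` eventually; the same argument applied to `t² g'` gives `g ≤ C - δ t / 16`, and `e^{4g}`
decays exponentially.
-/

open MeasureTheory Real Filter Asymptotics

noncomputable section

abbrev E4 := EuclideanSpace ℝ (Fin 4)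

/-- `u` is a normal solution of `Δ²u = K e^{4u}` on `ℝ⁴` with total curvature `Λ`. -/
def NormalSolution (K u : E4 → ℝ) (Λ : ℝ) : Prop :=
  Continuous u ∧
  Integrable (fun y : E4 => K y * Real.exp (4 * u y)) ∧
  Λ = ∫ y : E4, K y * Real.exp (4 * u y) ∧
  ∃ c : ℝ, ∀ x : E4, u x =
    (1 / (8 * π ^ 2)) * ∫ y : E4, Real.log (‖y‖ / ‖x - y‖) * (K y * Real.exp (4 * u y)) + c

/-- `u` is radially symmetric. -/
def Radial (u : E4 → ℝ) : Prop := ∀ x y : E4, ‖x‖ = ‖y‖ → u x = u y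

/-- The Euclidean Laplacian: trace of the second derivative. -/
def lap (f : E4 → ℝ) (x : E4) : ℝ :=
  ∑ i : Fin 4, iteratedFDeriv ℝ 2 f x
    ![EuclideanSpace.single i (1 : ℝ), EuclideanSpace.single i (1 : ℝ)]

open Set Topology

def radialLap (g : ℝ → ℝ) (t : ℝ) : ℝ :=
  4 * t * deriv (deriv g) t + 8 * deriv g t

lemma ContDiffOn.hasDerivAt_deriv {f : ℝ → ℝ} {s : Set ℝ} {n : WithTop ℕ∞} {t : ℝ}
    (hf : ContDiffOn ℝ n f s) (hs : IsOpen s) (hn : n ≠ 0) (ht : t ∈ s) :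
    HasDerivAt f (deriv f t) t :=
  ((hf.differentiableOn hn t ht).differentiableAt (hs.mem_nhds ht)).hasDerivAt

lemma ContDiffOn.radialLap {g : ℝ → ℝ} {n : ℕ} (hg : ContDiffOn ℝ (n + 2) g (Ioi 0)) :
    ContDiffOn ℝ n (radialLap g) (Ioi 0) := by
  have h1 : ContDiffOn ℝ (n + 1) (deriv g) (Ioi 0) := hg.deriv_of_isOpen isOpen_Ioi (by norm_cast)
  have h2 : ContDiffOn ℝ n (deriv (deriv g)) (Ioi 0) := h1.deriv_of_isOpen isOpen_Ioi le_rfl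
  unfold _root_.radialLap
  exact ((contDiffOn_const.mul contDiffOn_id).mul h2).add
    (contDiffOn_const.mul (h1.of_le (by norm_cast; omega)))

section Comparison

variable {f g f' g' : ℝ → ℝ}

lemma exists_antitoneOn_Ici_of_hasDerivAt_nonpos
    (hf : ∀ᶠ t in atTop, HasDerivAt f (f' t) t) (hf' : ∀ᶠ t in atTop, f' t ≤ 0) :
    ∃ T, AntitoneOn f (Ici T) := by
  obtain ⟨T, hT⟩ := eventually_atTop.1 (hf.and hf')
  refine ⟨T, antitoneOn_of_hasDerivWithinAt_nonpos (f' := f') (convex_Ici T)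
    (fun t ht => (hT t ht).1.continuousAt.continuousWithinAt) (fun t ht => ?_) (fun t ht => ?_)⟩
  · rw [interior_Ici] at ht ⊢
    exact (hT t (le_of_lt ht)).1.hasDerivWithinAt
  · rw [interior_Ici] at ht
    exact (hT t (le_of_lt ht)).2

lemma exists_eventually_le_add_of_hasDerivAt_le
    (hf : ∀ᶠ t in atTop, HasDerivAt f (f' t) t) (hg : ∀ᶠ t in atTop, HasDerivAt g (g' t) t)
    (hle : ∀ᶠ t in atTop, f' t ≤ g' t) : ∃ C, ∀ᶠ t in atTop, f t ≤ g t + C := by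
  obtain ⟨T, hT⟩ := exists_antitoneOn_Ici_of_hasDerivAt_nonpos (f := f - g)
    (hf.and hg |>.mono fun t h => h.1.sub h.2) (hle.mono fun t h => sub_nonpos.2 h)
  refine ⟨f T - g T, eventually_atTop.2 ⟨T, fun t ht => ?_⟩⟩
  have := hT self_mem_Ici ht ht
  simp only [Pi.sub_apply] at this
  linarith

lemma eventually_le_of_hasDerivAt_sq_mul_le {h d : ℝ → ℝ} {c : ℝ} (hc : 0 < c)
    (hd : ∀ᶠ t in atTop, HasDerivAt (fun s => s ^ 2 * h s) (d t) t)
    (hdc : ∀ᶠ t in atTop, d t ≤ -c * t) : ∀ᶠ t in atTop, h t ≤ -(c / 4) := by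
  have hsq : ∀ t, HasDerivAt (fun s : ℝ => -c / 2 * s ^ 2) (-c * t) t := fun t =>
    ((hasDerivAt_pow 2 t).const_mul (-c / 2)).congr_deriv (by ring)
  obtain ⟨C, hC⟩ := exists_eventually_le_add_of_hasDerivAt_le hd (Eventually.of_forall hsq) hdc
  filter_upwards [hC, eventually_gt_atTop 0,
    (tendsto_pow_atTop two_ne_zero).eventually_ge_atTop (4 * |C| / c)] with t hCt ht hlarge
  rw [div_le_iff₀ hc] at hlarge
  have : t ^ 2 * h t ≤ t ^ 2 * -(c / 4) := by linarith [le_abs_self C]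
  exact le_of_mul_le_mul_left this (pow_pos ht 2)

lemma exists_eventually_ge_of_hasDerivAt_sq_mul_nonneg {h h' d : ℝ → ℝ}
    (hh : ∀ᶠ t in atTop, HasDerivAt h (h' t) t)
    (hd : ∀ᶠ t in atTop, HasDerivAt (fun s => s ^ 2 * h' s) (d t) t)
    (hd0 : ∀ᶠ t in atTop, 0 ≤ d t) : ∃ m, ∀ᶠ t in atTop, m ≤ h t := by
  obtain ⟨C, hC⟩ := exists_eventually_le_add_of_hasDerivAt_le (g := fun s => s ^ 2 * h' s)
    (Eventually.of_forall fun t => hasDerivAt_const t 0) hd hd0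
  have hinv : ∀ᶠ t in atTop, HasDerivAt (fun s => C / s) (-C / t ^ 2) t := by
    filter_upwards [eventually_gt_atTop 0] with t ht
    simpa [div_eq_mul_inv, neg_div] using (hasDerivAt_inv ht.ne').const_mul C
  obtain ⟨C', hC'⟩ := exists_eventually_le_add_of_hasDerivAt_le hinv hh (by
    filter_upwards [hC, eventually_gt_atTop 0] with t hCt ht
    rw [div_le_iff₀ (by positivity)]
    linarith)
  refine ⟨-|C| - C', ?_⟩
  filter_upwards [hC', eventually_ge_atTop 1] with t hCt ht
  have : -|C| ≤ C / t := by
    rw [le_div_iff₀ (by linarith)]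
    nlinarith [neg_abs_le C, abs_nonneg C]
  linarith

lemma exists_tendsto_of_hasDerivAt_nonpos {m : ℝ}
    (hf : ∀ᶠ t in atTop, HasDerivAt f (f' t) t) (hf' : ∀ᶠ t in atTop, f' t ≤ 0)
    (hm : ∀ᶠ t in atTop, m ≤ f t) : ∃ l, Tendsto f atTop (𝓝 l) := by
  obtain ⟨T, hT⟩ := exists_antitoneOn_Ici_of_hasDerivAt_nonpos hf hf'
  obtain ⟨T', hT'⟩ := eventually_atTop.1 hm
  set S := max T T'
  have hanti : Antitone fun t => f (max S t) := fun s t hst =>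
    hT (le_trans (le_max_left T T') (le_max_left S s))
      (le_trans (le_max_left T T') (le_max_left S t)) (max_le_max le_rfl hst)
  refine ⟨_, (tendsto_atTop_ciInf hanti ⟨m, ?_⟩).congr' ?_⟩
  · rintro _ ⟨t, rfl⟩
    exact hT' _ (le_trans (le_max_right T T') (le_max_left S t))
  · filter_upwards [eventually_ge_atTop S] with t ht
    rw [max_eq_right ht]

end Comparison

-- `(1 + ‖x‖ ^ p) e^{4u}` in the variable `t = ‖x‖²`, times the Jacobian `t` of polar coordinates
-- on `ℝ⁴`.
def radialDensity (q : ℝ) (g : ℝ → ℝ) (t : ℝ) : ℝ :=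
  t * ((1 + t ^ q) * exp (4 * g t))

section RadialDensity

variable {q : ℝ} {g : ℝ → ℝ}

lemma Continuous.radialDensity (hq : 0 ≤ q) (hg : Continuous g) :
    Continuous (radialDensity q g) := by
  unfold _root_.radialDensity
  have : Continuous fun t : ℝ => t ^ q := continuous_id.rpow_const fun _ => Or.inr hq
  fun_prop

lemma radialDensity_le (hq : 0 ≤ q) {t : ℝ} (ht : 1 ≤ t) :
    radialDensity q g t ≤ 2 * t ^ (1 + q) * exp (4 * g t) := by
  have h1 : 1 ≤ t ^ q := Real.one_le_rpow ht hq
  rw [radialDensity, Real.rpow_add (by linarith), Real.rpow_one]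
  nlinarith [exp_pos (4 * g t), mul_nonneg (by linarith : (0:ℝ) ≤ t) (exp_pos (4 * g t)).le]

lemma integrableAtFilter_radialDensity_of_le_linear {a C : ℝ} (hq : 0 ≤ q) (ha : 0 < a)
    (hg : Continuous g) (hle : ∀ᶠ t in atTop, g t ≤ -a * t + C) :
    IntegrableAtFilter (radialDensity q g) atTop := by
  have hdecay : IntegrableAtFilter (fun t : ℝ => t ^ (1 + q) * exp (-(4 * a) * t ^ (1 : ℝ)))
      atTop :=
    ⟨Ioi 0, Ioi_mem_atTop 0,
      integrableOn_rpow_mul_exp_neg_mul_rpow (by linarith) one_pos (by positivity)⟩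
  refine IsBigO.integrableAtFilter ?_ ((hg.radialDensity hq).stronglyMeasurableAtFilter _ _) hdecay
  refine IsBigO.of_bound (2 * exp (4 * C)) ?_
  filter_upwards [hle, eventually_ge_atTop 1] with t hgt ht
  have hpos : 0 ≤ radialDensity q g t := by unfold radialDensity; positivity
  have hexp : exp (4 * g t) ≤ exp (4 * C) * exp (-(4 * a) * t) := by
    rw [← exp_add]; exact exp_le_exp.2 (by linarith)
  rw [Real.norm_of_nonneg hpos, Real.rpow_one, Real.norm_of_nonneg (by positivity)]
  calc radialDensity q g t ≤ 2 * t ^ (1 + q) * exp (4 * g t) := radialDensity_le hq ht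
    _ ≤ 2 * t ^ (1 + q) * (exp (4 * C) * exp (-(4 * a) * t)) := by gcongr
    _ = 2 * exp (4 * C) * (t ^ (1 + q) * exp (-(4 * a) * t)) := by ring

lemma eventually_mul_one_sub_rpow_mul_exp_nonpos (hq : 0 < q) :
    ∀ᶠ t in atTop, t / 4 * ((1 - t ^ q) * exp (4 * g t)) ≤ 0 := by
  filter_upwards [eventually_ge_atTop 0, (tendsto_rpow_atTop hq).eventually_ge_atTop 1]
    with t ht htq
  exact mul_nonpos_of_nonneg_of_nonpos (by linarith)
    (mul_nonpos_of_nonpos_of_nonneg (by linarith) (exp_pos _).le)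

lemma integrableAtFilter_radialDensity_of_primitive_nonneg {J : ℝ → ℝ} (hq : 0 < q)
    (hg : Continuous g)
    (hJ : ∀ᶠ t in atTop, HasDerivAt J (t / 4 * ((1 - t ^ q) * exp (4 * g t))) t)
    (hJ0 : ∀ᶠ t in atTop, 0 ≤ J t) :
    IntegrableAtFilter (radialDensity q g) atTop := by
  have hJ' := eventually_mul_one_sub_rpow_mul_exp_nonpos (g := g) hq
  obtain ⟨l, hl⟩ := exists_tendsto_of_hasDerivAt_nonpos hJ hJ' hJ0
  obtain ⟨T, hT⟩ := eventually_atTop.1 (hJ.and hJ')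
  have hint := integrableOn_Ioi_deriv_of_nonpos' (fun t ht => (hT t ht).1)
    (fun t ht => (hT t (le_of_lt ht)).2) hl
  refine IsBigO.integrableAtFilter ?_ ((hg.radialDensity hq.le).stronglyMeasurableAtFilter _ _)
    ⟨Ioi T, Ioi_mem_atTop T, hint⟩
  refine IsBigO.of_bound 16 ?_
  filter_upwards [hJ', eventually_ge_atTop 0, (tendsto_rpow_atTop hq).eventually_ge_atTop 2]
    with t hJ't ht htq
  have hpos : 0 ≤ radialDensity q g t := by unfold radialDensity; positivity
  rw [Real.norm_of_nonneg hpos, Real.norm_eq_abs, abs_of_nonpos hJ't]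
  unfold radialDensity
  nlinarith [mul_nonneg ht (exp_pos (4 * g t)).le]

end RadialDensity

lemma hasDerivAt_sq_mul_deriv {g : ℝ → ℝ} (hg : ContDiffOn ℝ 2 g (Ioi 0)) {t : ℝ} (ht : 0 < t) :
    HasDerivAt (fun s => s ^ 2 * deriv g s) (t / 4 * radialLap g t) t := by
  have hg1 : ContDiffOn ℝ 1 (deriv g) (Ioi 0) := hg.deriv_of_isOpen isOpen_Ioi (by norm_num)
  refine ((hasDerivAt_pow 2 t).mul (hg1.hasDerivAt_deriv isOpen_Ioi one_ne_zero ht)).congr_deriv ?_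
  rw [radialLap]
  push_cast
  ring

section RadialODE

variable {q : ℝ} {g : ℝ → ℝ}

lemma eventually_hasDerivAt_sq_mul_deriv (hg : ContDiffOn ℝ 4 g (Ioi 0)) :
    ∀ᶠ t in atTop, HasDerivAt (fun s => s ^ 2 * deriv g s) (t / 4 * radialLap g t) t := by
  filter_upwards [eventually_gt_atTop 0] with t ht
  exact hasDerivAt_sq_mul_deriv (hg.of_le (by norm_num)) ht

lemma eventually_hasDerivAt_sq_mul_deriv_radialLap (hg : ContDiffOn ℝ 4 g (Ioi 0))
    (hode : ∀ t > 0, radialLap (radialLap g) t = (1 - t ^ q) * exp (4 * g t)) :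
    ∀ᶠ t in atTop, HasDerivAt (fun s => s ^ 2 * deriv (radialLap g) s)
      (t / 4 * ((1 - t ^ q) * exp (4 * g t))) t := by
  filter_upwards [eventually_gt_atTop 0] with t ht
  rw [← hode t ht]
  exact hasDerivAt_sq_mul_deriv (ContDiffOn.radialLap (n := 2) hg) ht

lemma eventually_hasDerivAt_deriv {f : ℝ → ℝ} {n : WithTop ℕ∞} (hf : ContDiffOn ℝ n f (Ioi 0))
    (hn : n ≠ 0) : ∀ᶠ t in atTop, HasDerivAt f (deriv f t) t := by
  filter_upwards [eventually_gt_atTop 0] with t ht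
  exact hf.hasDerivAt_deriv isOpen_Ioi hn ht

lemma frequently_radialLap_neg (hq : 0 < q) (hg : ContDiffOn ℝ 4 g (Ioi 0))
    (hode : ∀ t > 0, radialLap (radialLap g) t = (1 - t ^ q) * exp (4 * g t)) :
    ∃ᶠ t in atTop, radialLap g t < 0 := by
  intro hw
  simp only [not_lt] at hw
  obtain ⟨m, hm⟩ := exists_eventually_ge_of_hasDerivAt_sq_mul_nonneg
    (eventually_hasDerivAt_deriv hg (by norm_num)) (eventually_hasDerivAt_sq_mul_deriv hg) (by
      filter_upwards [hw, eventually_ge_atTop 0] with t hwt ht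
      positivity)
  have hsource : ∀ᶠ t in atTop,
      t / 4 * ((1 - t ^ q) * exp (4 * g t)) ≤ -(exp (4 * m) / 4) * t := by
    filter_upwards [hm, eventually_ge_atTop 0, (tendsto_rpow_atTop hq).eventually_ge_atTop 2]
      with t hmt ht htq
    have hexp : exp (4 * m) ≤ exp (4 * g t) := exp_le_exp.2 (by linarith)
    have : (1 - t ^ q) * exp (4 * g t) ≤ -exp (4 * m) := by nlinarith [exp_pos (4 * g t)]
    nlinarith
  have hw' := eventually_le_of_hasDerivAt_sq_mul_le (by positivity)
    (eventually_hasDerivAt_sq_mul_deriv_radialLap hg hode) hsource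
  obtain ⟨C, hC⟩ := exists_eventually_le_add_of_hasDerivAt_le
    (eventually_hasDerivAt_deriv (ContDiffOn.radialLap (n := 2) hg) (by norm_num))
    (Eventually.of_forall fun _ => hasDerivAt_const_mul (-(exp (4 * m) / 4 / 4))) hw'
  obtain ⟨t, hwt, hCt, ht⟩ := (hw.and (hC.and (eventually_gt_atTop (16 * C / exp (4 * m))))).exists
  rw [div_lt_iff₀ (by positivity)] at ht
  linarith

lemma exists_eventually_radialLap_le_neg (hq : 0 < q) (hg : ContDiffOn ℝ 4 g (Ioi 0))
    (hode : ∀ t > 0, radialLap (radialLap g) t = (1 - t ^ q) * exp (4 * g t))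
    (hJ : ¬ ∀ᶠ t in atTop, 0 ≤ t ^ 2 * deriv (radialLap g) t) :
    ∃ δ > 0, ∀ᶠ t in atTop, radialLap g t ≤ -δ := by
  obtain ⟨T, hT⟩ := exists_antitoneOn_Ici_of_hasDerivAt_nonpos
    (eventually_hasDerivAt_sq_mul_deriv_radialLap hg hode)
    (eventually_mul_one_sub_rpow_mul_exp_nonpos hq)
  obtain ⟨t₀, hJt₀, ht₀⟩ :=
    ((not_eventually.1 hJ).and_eventually (eventually_ge_atTop (max T 1))).exists
  have hw' : ∀ᶠ t in atTop, deriv (radialLap g) t ≤ 0 := by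
    filter_upwards [eventually_ge_atTop t₀] with t ht
    have hJt := hT (le_of_max_le_left ht₀) (le_of_max_le_left (ht₀.trans ht)) ht
    have ht0 : 0 < t ^ 2 := by have := le_of_max_le_right (ht₀.trans ht); positivity
    simp only at hJt
    nlinarith
  obtain ⟨T₁, hT₁⟩ := exists_antitoneOn_Ici_of_hasDerivAt_nonpos
    (eventually_hasDerivAt_deriv (ContDiffOn.radialLap (n := 2) hg) (by norm_num)) hw'
  obtain ⟨t₁, hwt₁, ht₁⟩ :=
    ((frequently_radialLap_neg hq hg hode).and_eventually (eventually_ge_atTop T₁)).exists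
  exact ⟨-radialLap g t₁, by linarith, eventually_atTop.2 ⟨t₁, fun t ht => by
    linarith [hT₁ ht₁ (ht₁.trans ht) ht]⟩⟩

lemma integrableOn_radialDensity (hq : 0 < q) (hgc : Continuous g)
    (hg : ContDiffOn ℝ 4 g (Ioi 0))
    (hode : ∀ t > 0, radialLap (radialLap g) t = (1 - t ^ q) * exp (4 * g t)) :
    IntegrableOn (radialDensity q g) (Ioi 0) := by
  suffices h : IntegrableAtFilter (radialDensity q g) atTop from
    (integrableOn_Ici_iff_integrableAtFilter_atTop.2 ⟨h, (hgc.radialDensity hq.le).continuousOn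
      |>.locallyIntegrableOn measurableSet_Ici⟩).mono_set Ioi_subset_Ici_self
  by_cases hJ : ∀ᶠ t in atTop, 0 ≤ t ^ 2 * deriv (radialLap g) t
  · exact integrableAtFilter_radialDensity_of_primitive_nonneg hq hgc
      (eventually_hasDerivAt_sq_mul_deriv_radialLap hg hode) hJ
  obtain ⟨δ, hδ, hw⟩ := exists_eventually_radialLap_le_neg hq hg hode hJ
  have hg' := eventually_le_of_hasDerivAt_sq_mul_le (c := δ / 4) (by positivity)
    (eventually_hasDerivAt_sq_mul_deriv hg) (by
      filter_upwards [hw, eventually_ge_atTop 0] with t hwt ht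
      nlinarith)
  obtain ⟨C, hC⟩ := exists_eventually_le_add_of_hasDerivAt_le
    (eventually_hasDerivAt_deriv hg (by norm_num))
    (Eventually.of_forall fun _ => hasDerivAt_const_mul (-(δ / 4 / 4))) hg'
  exact integrableAtFilter_radialDensity_of_le_linear hq.le (by positivity) hgc hC

end RadialODE

lemma hasFDerivAt_comp_norm_sq {g : ℝ → ℝ} {g' : ℝ} {x : E4} (hg : HasDerivAt g g' (‖x‖ ^ 2)) :
    HasFDerivAt (fun y : E4 => g (‖y‖ ^ 2)) ((2 * g') • innerSL ℝ x) x := by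
  refine (hg.comp_hasFDerivAt x (hasStrictFDerivAt_norm_sq x).hasFDerivAt).congr_fderiv ?_
  ext v
  simp only [smul_apply, innerSL_apply_apply, smul_eq_mul, nsmul_eq_mul]
  push_cast; ring

lemma lap_eq_of_eventuallyEq_comp_norm_sq {V : E4 → ℝ} {g g' : ℝ → ℝ} {a : ℝ} {x : E4}
    (hV : V =ᶠ[𝓝 x] fun y => g (‖y‖ ^ 2))
    (hg : ∀ᶠ t in 𝓝 (‖x‖ ^ 2), HasDerivAt g (g' t) t) (hg' : HasDerivAt g' a (‖x‖ ^ 2)) :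
    lap V x = 4 * ‖x‖ ^ 2 * a + 8 * g' (‖x‖ ^ 2) := by
  have hnorm : Continuous fun y : E4 => ‖y‖ ^ 2 := by fun_prop
  have hdV : fderiv ℝ V =ᶠ[𝓝 x] fun y => (2 * g' (‖y‖ ^ 2)) • innerSL ℝ y := by
    filter_upwards [hV.eventuallyEq_nhds, hnorm.continuousAt.eventually hg] with y hVy hgy
    rw [hVy.fderiv_eq, (hasFDerivAt_comp_norm_sq hgy).fderiv]
  have hd2V := ((hasFDerivAt_comp_norm_sq (hg'.const_mul 2)).smul
    (innerSL ℝ : E4 →L[ℝ] E4 →L[ℝ] ℝ).hasFDerivAt).congr_of_eventuallyEq hdV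
  simp only [lap, iteratedFDeriv_two_apply, Matrix.cons_val_zero, Matrix.cons_val_one,
    hd2V.fderiv]
  have hinner (y z : E4) : innerSL ℝ y z = inner ℝ y z := rfl
  simp only [EuclideanSpace.real_norm_sq_eq, Fin.sum_univ_four, Fin.isValue, add_apply, smul_apply,
    ContinuousLinearMap.smulRight_apply, hinner, EuclideanSpace.inner_single_right, ringHom_apply,
    one_mul, smul_eq_mul, inner_self_eq_norm_sq_to_K, PiLp.norm_single, norm_one, one_pow, mul_one]
  ring

lemma lap_eq_radialLap {V : E4 → ℝ} {g : ℝ → ℝ} {x : E4} (hg : ContDiffOn ℝ 2 g (Ioi 0))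
    (hx : x ≠ 0) (hV : V =ᶠ[𝓝 x] fun y => g (‖y‖ ^ 2)) :
    lap V x = radialLap g (‖x‖ ^ 2) := by
  have hx2 : ‖x‖ ^ 2 ∈ Ioi (0 : ℝ) := pow_pos (norm_pos_iff.2 hx) 2
  have hg1 : ContDiffOn ℝ 1 (deriv g) (Ioi 0) := hg.deriv_of_isOpen isOpen_Ioi (by norm_num)
  rw [lap_eq_of_eventuallyEq_comp_norm_sq hV
    (eventually_of_mem (isOpen_Ioi.mem_nhds hx2) fun t ht =>
      hg.hasDerivAt_deriv isOpen_Ioi (by norm_num) ht)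
    (hg1.hasDerivAt_deriv isOpen_Ioi (by norm_num) hx2), radialLap]

def radialProfile (u : E4 → ℝ) (t : ℝ) : ℝ :=
  u (√t • EuclideanSpace.single 0 1)

lemma Radial.eq_radialProfile {u : E4 → ℝ} (hu : Radial u) (x : E4) :
    u x = radialProfile u (‖x‖ ^ 2) := by
  refine hu _ _ ?_
  rw [norm_smul, Real.sqrt_sq (norm_nonneg x), PiLp.norm_single]
  simp

lemma Continuous.radialProfile {u : E4 → ℝ} (hu : Continuous u) :
    Continuous (radialProfile u) := by
  unfold _root_.radialProfile
  fun_prop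

lemma ContDiff.contDiffOn_radialProfile {u : E4 → ℝ} {n : WithTop ℕ∞} (hu : ContDiff ℝ n u) :
    ContDiffOn ℝ n (radialProfile u) (Ioi 0) := fun t ht =>
  (hu.contDiffAt.comp t ((Real.contDiffAt_sqrt (ne_of_gt ht)).smul contDiffAt_const))
    |>.contDiffWithinAt

lemma Radial.lap_lap_eq {u : E4 → ℝ} (hu : ContDiff ℝ 4 u) (hrad : Radial u) {x : E4}
    (hx : x ≠ 0) : lap (lap u) x = radialLap (radialLap (radialProfile u)) (‖x‖ ^ 2) := by
  have hg : ContDiffOn ℝ (2 + 2) (radialProfile u) (Ioi 0) := hu.contDiffOn_radialProfile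
  have hlap : lap u =ᶠ[𝓝 x] fun y => radialLap (radialProfile u) (‖y‖ ^ 2) := by
    filter_upwards [isOpen_compl_singleton.mem_nhds hx] with y hy
    exact lap_eq_radialLap (hg.of_le (by norm_num)) hy
      (Eventually.of_forall hrad.eq_radialProfile)
  exact lap_eq_radialLap (ContDiffOn.radialLap (n := 2) hg) hx hlap

lemma integrable_comp_norm_sq {F : ℝ → ℝ} (hF : IntegrableOn (fun t => t * F t) (Ioi 0)) :
    Integrable (fun x : E4 => F (‖x‖ ^ 2)) := by
  rw [integrable_fun_norm_addHaar volume (f := fun r => F (r ^ 2)), finrank_euclideanSpace_fin]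
  rw [← integrableOn_Ioi_comp_rpow_iff' _ two_ne_zero] at hF
  refine hF.congr_fun (fun r hr => ?_) measurableSet_Ioi
  simp only [smul_eq_mul, Real.rpow_two]
  norm_num
  ring

lemma sq_rpow_half {r : ℝ} (hr : 0 ≤ r) (p : ℝ) : (r ^ 2) ^ (p / 2) = r ^ p := by
  rw [← Real.rpow_natCast, ← Real.rpow_mul hr]
  congr 1
  push_cast
  ring

theorem stmt16 (p : ℝ) (hp : 0 < p) (u : E4 → ℝ)
    (hu : ContDiff ℝ 4 u) (hrad : Radial u)
    (heq : ∀ x : E4, lap (lap u) x = (1 - ‖x‖ ^ p) * Real.exp (4 * u x)) :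
    Integrable (fun x : E4 => (1 + ‖x‖ ^ p) * Real.exp (4 * u x)) := by
  have hode : ∀ t > 0, radialLap (radialLap (radialProfile u)) t =
      (1 - t ^ (p / 2)) * exp (4 * radialProfile u t) := by
    intro t ht
    obtain ⟨x, hx⟩ := exists_norm_eq E4 (Real.sqrt_nonneg t)
    have hxt : ‖x‖ ^ 2 = t := by rw [hx, Real.sq_sqrt ht.le]
    have hx0 : x ≠ 0 := by rintro rfl; simp at hxt; linarith
    rw [← hxt, ← hrad.lap_lap_eq hu hx0, heq, ← hrad.eq_radialProfile, sq_rpow_half (norm_nonneg x)]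
  have hint := integrableOn_radialDensity (half_pos hp) hu.continuous.radialProfile
    hu.contDiffOn_radialProfile hode
  convert integrable_comp_norm_sq hint using 2 with x
  rw [sq_rpow_half (norm_nonneg x), ← hrad.eq_radialProfile]
end
end

section
/- Fix p > 0 and let u be a normal solution of Δ²u = (1+|x|^p)e^{4u} on ℝ⁴ with total curvature Λ > 0. Then there exist C ∈ ℝ and R ≥ 1 such that u(x) ≥ −(Λ/(8π²))·log|x| − C for all |x| ≥ R, and consequently Λ > (4+p)·2π². -/
/-!
Put `f = (1 + |x|^p) e^{4u}`. For `|x| ≥ 1` the kernel satisfies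
`log|x| + log(|y|/|x-y|) ≥ -log 2 - log⁺(1/|y|)`, so the integral representation gives
`u(x) ≥ -(Λ/8π²) log|x| - C` with `C` finite because `log⁺(1/|y|)` is locally integrable and `f` is
continuous and integrable. Hence `f(x) ≳ |x|^(p - Λ/2π²)` at infinity, and since `f` is integrable
on `ℝ⁴` this forces `p - Λ/2π² < -4`.
-/

open MeasureTheory Real Filter Asymptotics

noncomputable section

open Set Metric Module

namespace Real

lemma log_div_le_of_le_add {a b X : ℝ} (ha : 0 ≤ a) (hb : 0 ≤ b) (hab : a ≤ b + X) :
    log (a / b) ≤ log 2 + log⁺ X + log⁺ b⁻¹ := by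
  have hrhs : 0 ≤ log 2 + log⁺ X + log⁺ b⁻¹ := by
    linarith [log_nonneg one_le_two, posLog_nonneg (x := X), posLog_nonneg (x := b⁻¹)]
  rcases hb.eq_or_lt with rfl | hb
  · simpa using hrhs
  calc log (a / b) ≤ log⁺ (a / b) := le_max_right _ _
    _ ≤ log⁺ (1 + X * b⁻¹) := by
        refine posLog_le_posLog (by positivity) ?_
        rw [div_le_iff₀ hb]
        field_simp
        linarith
    _ ≤ log 2 + log⁺ 1 + log⁺ (X * b⁻¹) := posLog_add
    _ ≤ log 2 + log⁺ X + log⁺ b⁻¹ := by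
        have := posLog_mul (x := X) (y := b⁻¹)
        simp only [posLog_one]
        linarith

end Real

section NormedGroup

variable {E : Type*} [SeminormedAddCommGroup E]

lemma abs_log_norm_div_norm_sub_le (x y : E) :
    |log (‖y‖ / ‖x - y‖)| ≤ log 2 + log⁺ ‖x‖ + log⁺ ‖y‖⁻¹ + log⁺ ‖x - y‖⁻¹ := by
  have h₁ := log_div_le_of_le_add (norm_nonneg y) (norm_nonneg (x - y))
    ((norm_le_norm_add_norm_sub x y).trans_eq (add_comm _ _))
  have h₂ := log_div_le_of_le_add (norm_nonneg (x - y)) (norm_nonneg y)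
    ((norm_sub_le x y).trans_eq (add_comm _ _))
  rw [← inv_div, log_inv] at h₂
  have := posLog_nonneg (x := ‖y‖⁻¹)
  have := posLog_nonneg (x := ‖x - y‖⁻¹)
  exact abs_le.mpr ⟨by linarith, by linarith⟩

lemma neg_log_two_sub_posLog_le_log_norm_add (x y : E) (hx : 1 ≤ ‖x‖) :
    -log 2 - log⁺ ‖y‖⁻¹ ≤ log ‖x‖ + log (‖y‖ / ‖x - y‖) := by
  have h := log_div_le_of_le_add (norm_nonneg (x - y)) (norm_nonneg y)
    ((norm_sub_le x y).trans_eq (add_comm _ _))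
  rw [← inv_div, log_inv, posLog_eq_log (by rwa [abs_norm])] at h
  linarith

end NormedGroup

section Haar

variable {E : Type*} [NormedAddCommGroup E] [NormedSpace ℝ E] [FiniteDimensional ℝ E]
  [MeasurableSpace E] [BorelSpace E] [Nontrivial E] (μ : Measure E) [μ.IsAddHaarMeasure]

lemma integrable_posLog_inv_norm : Integrable (fun x : E => log⁺ ‖x‖⁻¹) μ := by
  have hmeas : Measurable fun x : E => log⁺ ‖x‖⁻¹ := by fun_prop
  have hball : IntegrableOn (fun x : E => log⁺ ‖x‖⁻¹) (ball 0 1) μ := by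
    -- `log t ≤ 2 √t`: the singularity is `O(‖x‖^(-1/2))`, integrable in every dimension `≥ 1`
    have hdim : (1 : ℝ) ≤ finrank ℝ E := by exact_mod_cast finrank_pos
    refine integrableOn_ball_of_norm_le_rpow finrank_pos (C := 2) (α := 1 / 2) (by linarith) ?_
      hmeas.aestronglyMeasurable
    refine .of_forall fun x => ?_
    have hx := norm_nonneg x
    rw [Real.norm_eq_abs, abs_of_nonneg posLog_nonneg, posLog_apply]
    refine max_le (by positivity) ?_
    calc log ‖x‖⁻¹ ≤ ‖x‖⁻¹ ^ (1 / 2 : ℝ) / (1 / 2) :=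
          log_le_rpow_div (by positivity) (by norm_num)
      _ = 2 * ‖x‖ ^ (-(1 / 2) : ℝ) := by rw [inv_rpow hx, rpow_neg hx]; ring
  refine (integrableOn_iff_integrable_of_support_subset fun x hx => ?_).mp hball
  rw [Function.mem_support, ne_eq, posLog_eq_zero_iff, abs_inv, abs_norm, not_le] at hx
  rw [mem_ball_zero_iff]
  exact (one_lt_inv₀ (inv_pos.mp (one_pos.trans hx))).mp hx

variable {μ} in
lemma Continuous.integrable_posLog_inv_norm_sub_mul {f : E → ℝ} (hf : Continuous f) (x : E) :
    Integrable (fun y => log⁺ ‖x - y‖⁻¹ * f y) μ := by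
  obtain ⟨M, hM⟩ := (isCompact_closedBall x 1).exists_bound_of_continuousOn hf.continuousOn
  have hlog : Integrable (fun y => log⁺ ‖x - y‖⁻¹) μ := by
    simpa only [norm_sub_rev] using (integrable_posLog_inv_norm μ).comp_sub_right x
  refine (hlog.const_mul M).mono' (Measurable.aestronglyMeasurable (by fun_prop))
    (.of_forall fun y => ?_)
  rw [norm_mul, Real.norm_eq_abs, abs_of_nonneg posLog_nonneg, mul_comm]
  by_cases hy : y ∈ closedBall x 1
  · exact mul_le_mul_of_nonneg_right (hM y hy) posLog_nonneg
  · rw [mem_closedBall, dist_eq_norm, ← norm_sub_rev, not_le] at hy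
    rw [(posLog_eq_zero_iff _).mpr (by rw [abs_inv, abs_norm]; exact inv_le_one_of_one_le₀ hy.le)]
    simp

variable {μ} in
lemma integrable_log_norm_div_norm_sub_mul {f : E → ℝ} (hf : Integrable f μ) (hfc : Continuous f)
    (x : E) : Integrable (fun y => log (‖y‖ / ‖x - y‖) * f y) μ := by
  have hmaj := ((hf.norm.const_mul (log 2 + log⁺ ‖x‖)).add
    (hfc.norm.integrable_posLog_inv_norm_sub_mul 0)).add
    (hfc.norm.integrable_posLog_inv_norm_sub_mul x)
  refine hmaj.mono' (Measurable.aestronglyMeasurable (by fun_prop)) (.of_forall fun y => ?_)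
  simp only [Pi.add_apply, zero_sub, norm_neg, norm_mul, Real.norm_eq_abs]
  calc |log (‖y‖ / ‖x - y‖)| * |f y|
      ≤ (log 2 + log⁺ ‖x‖ + log⁺ ‖y‖⁻¹ + log⁺ ‖x - y‖⁻¹) * |f y| :=
        mul_le_mul_of_nonneg_right (abs_log_norm_div_norm_sub_le x y) (abs_nonneg _)
    _ = _ := by ring

variable {μ} in
lemma neg_integral_le_log_norm_mul_integral_add {f : E → ℝ} (hf0 : ∀ y, 0 ≤ f y)
    (hf : Integrable f μ) (hfc : Continuous f) {x : E} (hx : 1 ≤ ‖x‖) :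
    -∫ y, (log 2 + log⁺ ‖y‖⁻¹) * f y ∂μ
      ≤ log ‖x‖ * ∫ y, f y ∂μ + ∫ y, log (‖y‖ / ‖x - y‖) * f y ∂μ := by
  have hlower_int : Integrable (fun y => (log 2 + log⁺ ‖y‖⁻¹) * f y) μ := by
    refine ((hf.const_mul (log 2)).add (hfc.integrable_posLog_inv_norm_sub_mul 0)).congr
      (.of_forall fun y => ?_)
    simp only [Pi.add_apply, zero_sub, norm_neg, add_mul]
  rw [← integral_neg, ← integral_const_mul,
    ← integral_add (hf.const_mul _) (integrable_log_norm_div_norm_sub_mul hf hfc x)]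
  refine integral_mono hlower_int.neg
    ((hf.const_mul _).add (integrable_log_norm_div_norm_sub_mul hf hfc x)) fun y => ?_
  have := mul_le_mul_of_nonneg_right (neg_log_two_sub_posLog_le_log_norm_add x y hx) (hf0 y)
  linarith

lemma not_integrableOn_norm_rpow {s : ℝ} (hs : -(finrank ℝ E : ℝ) ≤ s) :
    ¬ IntegrableOn (fun x : E => ‖x‖ ^ s) {x | 1 ≤ ‖x‖} μ := by
  intro h
  rw [← integrable_indicator_iff (measurableSet_le measurable_const measurable_norm)] at h
  have h' : Integrable (fun x : E => (Ici 1).indicator (fun r : ℝ => r ^ s) ‖x‖) μ := by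
    refine h.congr (.of_forall fun x => ?_)
    by_cases hx : 1 ≤ ‖x‖ <;> simp [hx]
  rw [integrable_fun_norm_addHaar μ] at h'
  have hI : IntegrableOn (fun r : ℝ => r ^ ((finrank ℝ E : ℝ) - 1 + s)) (Ioi 1) := by
    refine (h'.mono_set (Ioi_subset_Ioi zero_le_one)).congr_fun (fun r (hr : 1 < r) => ?_)
      measurableSet_Ioi
    have hr0 : 0 < r := one_pos.trans hr
    simp only [smul_eq_mul]
    rw [indicator_of_mem (mem_Ici.mpr hr.le), rpow_add hr0, rpow_sub hr0, rpow_one,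
      rpow_natCast, pow_sub₀ _ hr0.ne' finrank_pos, pow_one, div_eq_mul_inv]
  rw [integrableOn_Ioi_rpow_iff one_pos] at hI
  linarith

lemma not_integrable_const {c : ℝ} (hc : c ≠ 0) : ¬ Integrable (fun _ : E => c) μ := by
  rw [integrable_const_iff, not_or, not_isFiniteMeasure_iff]
  exact ⟨hc, measure_univ_of_isAddLeftInvariant μ⟩

end Haar

lemma NormalSolution.eq_integral_log {K u : E4 → ℝ} {Λ : ℝ} (hu : NormalSolution K u Λ)
    (hK : Continuous K) (hK_int : ¬ Integrable K) (x : E4) :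
    u x = 1 / (8 * π ^ 2) * ∫ y, log (‖y‖ / ‖x - y‖) * (K y * exp (4 * u y)) := by
  obtain ⟨hu_cont, hf, -, c, hc⟩ := hu
  have hfc : Continuous fun y => K y * exp (4 * u y) := by fun_prop
  -- `c` sits inside the integral: for `c ≠ 0` every integrand is non-integrable, so `u = 0`
  obtain rfl : c = 0 := by
    by_contra hc0
    have hu0 : ∀ x, u x = 0 := fun x => by
      rw [hc x, integral_undef fun h => not_integrable_const (volume : Measure E4) hc0 ?_, mul_zero]
      exact (h.sub (integrable_log_norm_div_norm_sub_mul hf hfc x)).congr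
        (.of_forall fun y => by simp)
    exact hK_int (by simpa [hu0] using hf)
  simpa using hc x

lemma rpow_sub_four_mul_le {r a C v p : ℝ} (hr : 0 < r) (hv : -a * log r - C ≤ v) :
    r ^ (p - 4 * a) ≤ exp (4 * C) * ((1 + r ^ p) * exp (4 * v)) := by
  rw [rpow_sub hr, rpow_def_of_pos hr (4 * a), div_eq_mul_inv, ← exp_neg]
  calc r ^ p * exp (-(log r * (4 * a))) ≤ (1 + r ^ p) * exp (4 * C + 4 * v) :=
        mul_le_mul (by linarith) (exp_le_exp.mpr (by linarith)) (by positivity) (by positivity)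
    _ = _ := by rw [exp_add]; ring

theorem stmt19_general (p : ℝ) (hp : 0 < p) (u : E4 → ℝ) (Λ : ℝ)
    (hu : NormalSolution (fun x => 1 + ‖x‖ ^ p) u Λ) :
    (∃ C : ℝ, ∃ R : ℝ, 1 ≤ R ∧ ∀ x : E4, R ≤ ‖x‖ →
      -(Λ / (8 * π ^ 2)) * Real.log ‖x‖ - C ≤ u x) ∧
    (4 + p) * 2 * π ^ 2 < Λ := by
  set K : E4 → ℝ := fun x => 1 + ‖x‖ ^ p
  have hK : Continuous K := continuous_const.add (continuous_norm.rpow_const fun _ => .inr hp.le)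
  have hK_int : ¬ Integrable K := fun h => not_integrable_const volume one_ne_zero <|
    h.mono' aestronglyMeasurable_const (.of_forall fun x => by simp [K]; positivity)
  have hrepr := hu.eq_integral_log hK hK_int
  obtain ⟨hu_cont, hf, hΛ, -⟩ := hu
  set C := 1 / (8 * π ^ 2) * ∫ y, (log 2 + log⁺ ‖y‖⁻¹) * (K y * exp (4 * u y)) with hC
  have hlower : ∀ x : E4, 1 ≤ ‖x‖ → -(Λ / (8 * π ^ 2)) * log ‖x‖ - C ≤ u x := fun x hx => by
    have := mul_le_mul_of_nonneg_left (neg_integral_le_log_norm_mul_integral_add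
      (fun y => by positivity) hf (by fun_prop) hx) (by positivity : 0 ≤ 1 / (8 * π ^ 2))
    rw [hrepr x, hΛ, hC]
    linear_combination this
  refine ⟨⟨C, 1, le_rfl, hlower⟩, ?_⟩
  by_contra! hΛ_le
  refine not_integrableOn_norm_rpow volume (s := p - 4 * (Λ / (8 * π ^ 2))) ?_
    ((hf.const_mul (exp (4 * C))).integrableOn.mono'
      (Measurable.aestronglyMeasurable (by fun_prop)) ?_)
  · rw [finrank_euclideanSpace_fin, Nat.cast_ofNat]
    field_simp
    linarith
  · filter_upwards [ae_restrict_mem (measurableSet_le measurable_const measurable_norm)]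
      with x (hx : 1 ≤ ‖x‖)
    rw [Real.norm_eq_abs, abs_of_nonneg (by positivity)]
    exact rpow_sub_four_mul_le (one_pos.trans_le hx) (hlower x hx)

theorem stmt19 (p : ℝ) (hp : 0 < p) (u : E4 → ℝ) (Λ : ℝ) (hΛ : 0 < Λ)
    (hu : NormalSolution (fun x => 1 + ‖x‖ ^ p) u Λ) :
    (∃ C : ℝ, ∃ R : ℝ, 1 ≤ R ∧ ∀ x : E4, R ≤ ‖x‖ →
      -(Λ / (8 * π ^ 2)) * Real.log ‖x‖ - C ≤ u x) ∧
    (4 + p) * 2 * π ^ 2 < Λ :=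
  stmt19_general p hp u Λ hu
end
end
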